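/- Let ρ₁ be the MCP with γ = λ = 1 and α > 1. If 1 < x < √α, then u = 0 is the unique global minimizer of h(u) = ρ₁(u) + (1/(2α))(u − x)², while if √α < x ≤ α, then u = x is the unique global minimizer; and if x = √α > 1 the set of minimizers is exactly {0, √α}. -/

import Mathlib

/-- The MCP penalty with γ = λ = 1. -/
noncomputable def rho1 (u : ℝ) : ℝ := if |u| < 1 then |u| - u ^ 2 / 2 else 1 / 2

/-!
On `[0, 1]` the objective `h(u) = ρ₁(u) + (u - x)² / (2α)` is a quadratic with leading
coefficient `(1/α - 1)/2 < 0`, so it lies strictly above the chord from `h 0` to `h 1 ≥ 1/2`;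
on `|u| ≥ 1` it equals `1/2 + (u - x)² / (2α)`, minimal only at `u = x`; and for `x > 0`
reflecting a negative `u` to `-u` strictly decreases it. Hence every `u ∉ {0, x}` has
`h u > min (h 0) (h x)`, and which of `h 0 = x² / (2α)`, `h x = 1/2` is smaller is decided by
comparing `x²` with `α`.
-/

section TwoCandidates

variable {ι β : Type*} [LinearOrder β] {f : ι → β} {a b : ι}

theorem lt_apply_of_lt_of_min_lt (hmin : ∀ u, u ≠ a → u ≠ b → min (f a) (f b) < f u)
    (hab : f a < f b) (u : ι) (hu : u ≠ a) : f a < f u := by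
  by_cases hub : u = b
  · exact hub ▸ hab
  · simpa [min_eq_left hab.le] using hmin u hu hub

theorem setOf_isMinimizer_eq_pair (hmin : ∀ u, u ≠ a → u ≠ b → min (f a) (f b) < f u)
    (hab : f a = f b) : {u | ∀ v, f u ≤ f v} = {a, b} := by
  have hmin' : ∀ u, u ≠ a → u ≠ b → f a < f u := by simpa [← hab] using hmin
  have ha : ∀ v, f a ≤ f v := fun v => by
    by_cases hva : v = a
    · rw [hva]
    by_cases hvb : v = b
    · rw [hvb, hab]
    exact (hmin' v hva hvb).le
  ext u
  simp only [Set.mem_ofPred_eq, Set.mem_insert_iff, Set.mem_singleton_iff]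
  constructor
  · intro hu
    by_contra! hne
    exact (hu a).not_gt (hmin' u hne.1 hne.2)
  · rintro (rfl | rfl)
    · exact ha
    · simpa [← hab] using ha

end TwoCandidates

lemma rho1_zero : rho1 0 = 0 := by simp [rho1]

lemma rho1_of_one_le_abs {u : ℝ} (h : 1 ≤ |u|) : rho1 u = 1 / 2 := by
  simp [rho1, not_lt.2 h]

lemma rho1_of_abs_lt_one {u : ℝ} (h : |u| < 1) : rho1 u = |u| - u ^ 2 / 2 := by
  simp [rho1, h]

lemma rho1_neg (u : ℝ) : rho1 (-u) = rho1 u := by simp [rho1]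

noncomputable def proxObjective (α x u : ℝ) : ℝ := rho1 u + (1 / (2 * α)) * (u - x) ^ 2

namespace proxObjective

variable {α x u : ℝ}

lemma zero : proxObjective α x 0 = x ^ 2 / (2 * α) := by
  simp [proxObjective, rho1_zero]; ring

lemma self (hx : 1 ≤ |x|) : proxObjective α x x = 1 / 2 := by
  simp [proxObjective, rho1_of_one_le_abs hx]

lemma one_half_lt_of_one_le_abs (hα : 0 < α) (hu : 1 ≤ |u|) (hux : u ≠ x) :
    1 / 2 < proxObjective α x u := by
  have : 0 < (u - x) ^ 2 := by positivity [sub_ne_zero.2 hux]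
  rw [proxObjective, rho1_of_one_le_abs hu]
  have : 0 < 1 / (2 * α) * (u - x) ^ 2 := by positivity
  linarith

lemma one_half_le_apply_one (hα : 0 < α) : 1 / 2 ≤ proxObjective α x 1 := by
  rw [proxObjective, rho1_of_one_le_abs (by norm_num)]
  have : 0 ≤ 1 / (2 * α) * (1 - x) ^ 2 := by positivity
  linarith

lemma eq_chord_add (hα : 0 < α) (hu0 : 0 ≤ u) (hu1 : u < 1) :
    proxObjective α x u = (1 - u) * proxObjective α x 0 + u * proxObjective α x 1
      + (α - 1) / (2 * α) * (u * (1 - u)) := by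
  simp only [proxObjective, rho1_zero, rho1_of_one_le_abs (le_of_eq abs_one.symm),
    rho1_of_abs_lt_one (abs_lt.2 ⟨by linarith, hu1⟩), abs_of_nonneg hu0]
  field_simp
  ring

lemma min_zero_one_lt (hα : 1 < α) (hu0 : 0 < u) (hu1 : u < 1) :
    min (proxObjective α x 0) (proxObjective α x 1) < proxObjective α x u := by
  have hα0 : 0 < α := by linarith
  set m := min (proxObjective α x 0) (proxObjective α x 1)
  have hbump : 0 < (α - 1) / (2 * α) * (u * (1 - u)) :=
    mul_pos (div_pos (by linarith) (by linarith)) (mul_pos hu0 (by linarith))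
  calc m = (1 - u) * m + u * m := by ring
    _ ≤ (1 - u) * proxObjective α x 0 + u * proxObjective α x 1 := by
      gcongr
      · exact min_le_left _ _
      · exact min_le_right _ _
    _ < proxObjective α x u := by rw [eq_chord_add hα0 hu0.le hu1]; linarith

lemma neg_lt (hα : 0 < α) (hx : 0 < x) (hu : u < 0) :
    proxObjective α x (-u) < proxObjective α x u := by
  rw [proxObjective, proxObjective, rho1_neg]
  have : (-u - x) ^ 2 < (u - x) ^ 2 := by nlinarith
  gcongr

lemma min_zero_self_lt_of_pos (hα : 1 < α) (hx : 1 ≤ x) (hu : 0 < u) (hux : u ≠ x) :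
    min (proxObjective α x 0) (proxObjective α x x) < proxObjective α x u := by
  have hα0 : 0 < α := by linarith
  rw [self (by rwa [abs_of_pos (by linarith)])]
  rcases lt_or_ge u 1 with hu1 | hu1
  · exact (min_le_min le_rfl (one_half_le_apply_one hα0)).trans_lt (min_zero_one_lt hα hu hu1)
  · exact (min_le_right _ _).trans_lt (one_half_lt_of_one_le_abs hα0 (by rwa [abs_of_pos hu]) hux)

lemma min_zero_self_lt (hα : 1 < α) (hx : 1 ≤ x) (hu0 : u ≠ 0) (hux : u ≠ x) :
    min (proxObjective α x 0) (proxObjective α x x) < proxObjective α x u := by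
  rcases hu0.lt_or_gt with hneg | hpos
  · refine lt_of_le_of_lt ?_ (neg_lt (by linarith) (by linarith) hneg)
    rcases eq_or_ne (-u) x with hnx | hnx
    · exact hnx ▸ min_le_right _ _
    · exact (min_zero_self_lt_of_pos hα hx (by linarith) hnx).le
  · exact min_zero_self_lt_of_pos hα hx hpos hux

end proxObjective

theorem prox_rho1_two_minima_case_general (α x : ℝ) (hα : 1 < α) (hx1 : 1 < x) :
    (x < Real.sqrt α →
      ∀ u : ℝ, u ≠ 0 →
        rho1 0 + (1 / (2 * α)) * (0 - x) ^ 2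
          < rho1 u + (1 / (2 * α)) * (u - x) ^ 2) ∧
    (Real.sqrt α < x →
      ∀ u : ℝ, u ≠ x →
        rho1 x + (1 / (2 * α)) * (x - x) ^ 2
          < rho1 u + (1 / (2 * α)) * (u - x) ^ 2) ∧
    (x = Real.sqrt α →
      {u : ℝ | ∀ v : ℝ,
          rho1 u + (1 / (2 * α)) * (u - x) ^ 2
            ≤ rho1 v + (1 / (2 * α)) * (v - x) ^ 2}
        = {0, Real.sqrt α}) := by
  have hα0 : 0 < α := by linarith
  have hmin := fun u => proxObjective.min_zero_self_lt (u := u) hα hx1.le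
  have h0 := proxObjective.zero (α := α) (x := x)
  have hx := proxObjective.self (α := α) (x := x) (by rw [abs_of_pos (by linarith)]; linarith)
  refine ⟨fun hlt => ?_, fun hlt => ?_, fun heq => ?_⟩
  · have hx2 : x ^ 2 < α := (Real.lt_sqrt (by linarith)).1 hlt
    refine lt_apply_of_lt_of_min_lt (f := proxObjective α x) hmin ?_
    rw [h0, hx, div_lt_iff₀ (by linarith)]
    linarith
  · have hx2 : α < x ^ 2 := (Real.sqrt_lt' (by linarith)).1 hlt
    refine lt_apply_of_lt_of_min_lt (f := proxObjective α x)
      (fun u hux hu0 => min_comm (proxObjective α x x) _ ▸ hmin u hu0 hux) ?_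
    rw [h0, hx, lt_div_iff₀ (by linarith)]
    linarith
  · have hx2 : x ^ 2 = α := heq ▸ Real.sq_sqrt hα0.le
    rw [← heq]
    refine setOf_isMinimizer_eq_pair (f := proxObjective α x) hmin ?_
    rw [h0, hx, hx2]
    field_simp

/-- For α > 1 and 1 < x ≤ α: if x < √α the unique global minimizer of
h(u) = ρ₁(u) + (1/(2α))(u − x)² is 0; if x > √α it is x; and if x = √α the set
of minimizers is exactly {0, √α}. -/
theorem prox_rho1_two_minima_case (α x : ℝ) (hα : 1 < α) (hx1 : 1 < x)
    (hxα : x ≤ α) :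
    (x < Real.sqrt α →
      ∀ u : ℝ, u ≠ 0 →
        rho1 0 + (1 / (2 * α)) * (0 - x) ^ 2
          < rho1 u + (1 / (2 * α)) * (u - x) ^ 2) ∧
    (Real.sqrt α < x →
      ∀ u : ℝ, u ≠ x →
        rho1 x + (1 / (2 * α)) * (x - x) ^ 2
          < rho1 u + (1 / (2 * α)) * (u - x) ^ 2) ∧
    (x = Real.sqrt α →
      {u : ℝ | ∀ v : ℝ,
          rho1 u + (1 / (2 * α)) * (u - x) ^ 2
            ≤ rho1 v + (1 / (2 * α)) * (v - x) ^ 2}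
        = {0, Real.sqrt α}) :=
  prox_rho1_two_minima_case_general α x hα hx1
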